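/- Let Δ ⊂ ℝ³ be the convex hull of the six points (−1,0,2), (0,1,0), (1,2,−1), (1,1,−1), (0,−1,0), (0,−1,−1), and let Δ' ⊂ ℝ³ be the convex hull of (1,0,−1), (0,−1,−1), (−1,−1,−1), (−1,2,−1), (1,2,−1), (1,0,1), (0,−1,2), (−1,−1,2). Let M be the integer matrix with rows (2,2,1), (−1,0,0), (1,1,1). Then det M = 1 (so M ∈ GL₃(ℤ)), and the linear map ℝ³ → ℝ³ sending a row vector v to v·M maps Δ bijectively onto the polar dual (Δ')* of Δ'. Consequently Δ is reflexive and its polar dual Δ* is isomorphic to Δ' under a lattice isometry of ℤ³. -/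

import Mathlib

/-!
The vector-matrix product with `M` sends the six vertices of `Δ` to six lattice points, and their
convex hull is exactly the region cut out by the eight facet inequalities of `(Δ')*`: one inclusion
is a check on vertices, the other an explicit triangulation into three simplices. As `M` is
unimodular, the bipolar theorem turns `Δ M = (Δ')*` into `Δ* = M Δ'`, a lattice polytope, and
`N = (Mᵀ)⁻¹` carries `Δ*` back onto `Δ'`. Finally `0` is interior to `Δ` because it is interior to
the polar dual of any finite set.
-/

open Matrix Set

section PolarDual

variable {ι : Type*} [Fintype ι]

def polarDual (A : Set (ι → ℝ)) : Set (ι → ℝ) := {y | ∀ x ∈ A, -1 ≤ y ⬝ᵥ x}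

lemma convex_polarDual (A : Set (ι → ℝ)) : Convex ℝ (polarDual A) := by
  intro y hy z hz a b ha hb hab x hx
  rw [add_dotProduct, smul_dotProduct, smul_dotProduct, smul_eq_mul, smul_eq_mul]
  nlinarith [hy x hx, hz x hx]

lemma polarDual_convexHull (A : Set (ι → ℝ)) : polarDual (convexHull ℝ A) = polarDual A := by
  refine subset_antisymm (fun y hy x hx => hy x (subset_convexHull ℝ A hx)) fun y hy x hx => ?_
  exact convexHull_min hy (convex_halfSpace_ge (dotProductBilin ℝ ℝ y).isLinear (-1)) hx

lemma zero_mem_interior_polarDual {A : Set (ι → ℝ)} (hA : A.Finite) :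
    (0 : ι → ℝ) ∈ interior (polarDual A) := by
  refine mem_interior.2 ⟨⋂ x ∈ A, {y | -1 < y ⬝ᵥ x}, ?_, ?_, ?_⟩
  · exact fun y hy x hx => (mem_iInter₂.1 hy x hx).le
  · exact hA.isOpen_biInter fun x _ => isOpen_lt continuous_const (by fun_prop)
  · simp

lemma polarDual_image_vecMul (M : Matrix ι ι ℝ) (A : Set (ι → ℝ)) :
    polarDual ((· ᵥ* M) '' A) = (M *ᵥ ·) ⁻¹' polarDual A := by
  ext y
  simp only [polarDual, mem_preimage, forall_mem_image, mem_ofPred_eq]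
  refine forall₂_congr fun x _ => ?_
  rw [dotProduct_comm, ← dotProduct_mulVec, dotProduct_comm]

lemma subset_polarDual_polarDual (A : Set (ι → ℝ)) : A ⊆ polarDual (polarDual A) :=
  fun x hx y hy => dotProduct_comm x y ▸ hy x hx

lemma polarDual_polarDual {C : Set (ι → ℝ)} (hconv : Convex ℝ C) (hclosed : IsClosed C)
    (h0 : (0 : ι → ℝ) ∈ C) : polarDual (polarDual C) = C := by
  refine subset_antisymm (fun y hy => ?_) (subset_polarDual_polarDual C)
  by_contra hyC
  obtain ⟨f, u, hfC, hfy⟩ := geometric_hahn_banach_closed_point hconv hclosed hyC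
  have hu : 0 < u := by simpa using hfC 0 h0
  classical
  -- `w` is the separating functional rescaled so that `C ⊆ {x | -1 < w ⬝ᵥ x}` while `w ⬝ᵥ y < -1`.
  set w : ι → ℝ := fun i => -f (fun j => if i = j then 1 else 0) / u
  have hw : ∀ x, w ⬝ᵥ x = -f x / u := by
    intro x
    rw [show f x = _ from (f : (ι → ℝ) →ₗ[ℝ] ℝ).pi_apply_eq_sum_univ x]
    simp only [w, dotProduct, Finset.sum_div, ← Finset.sum_neg_distrib]
    refine Finset.sum_congr rfl fun i _ => ?_
    simp only [smul_eq_mul, ContinuousLinearMap.coe_coe]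
    ring
  have hwC : w ∈ polarDual C := fun x hx => by
    rw [hw, le_div_iff₀ hu]
    linarith [hfC x hx]
  have hwy := hy w hwC
  rw [dotProduct_comm, hw, le_div_iff₀ hu] at hwy
  linarith

lemma polarDual_eq_image_mulVec [DecidableEq ι] {M : Matrix ι ι ℝ} (hM : IsUnit M)
    {A C : Set (ι → ℝ)} (hconv : Convex ℝ C) (hclosed : IsClosed C) (h0 : (0 : ι → ℝ) ∈ C)
    (hA : (· ᵥ* M) '' A = polarDual C) : polarDual A = (M *ᵥ ·) '' C := by
  have hpre := polarDual_image_vecMul M A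
  rw [hA, polarDual_polarDual hconv hclosed h0] at hpre
  rw [hpre, image_preimage_eq _ (mulVec_surjective_iff_isUnit.2 hM)]

lemma zero_mem_interior_of_image_vecMul_eq_polarDual [DecidableEq ι] {M : Matrix ι ι ℝ}
    (hM : IsUnit M) {A B : Set (ι → ℝ)} (hB : B.Finite) (hA : (· ᵥ* M) '' A = polarDual B) :
    (0 : ι → ℝ) ∈ interior A := by
  have hpre : A = (· ᵥ* M) ⁻¹' polarDual B := by
    rw [← hA, (vecMul_injective_iff_isUnit.2 hM).preimage_image]
  rw [hpre]
  refine preimage_interior_subset_interior_preimage (by fun_prop) ?_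
  simpa using zero_mem_interior_polarDual hB

end PolarDual

lemma exists_finset_image_intCast_eq {ι : Type*} {A : Set (ι → ℝ)} (hA : A.Finite)
    (hZ : A ⊆ range fun (p : ι → ℤ) i => (p i : ℝ)) :
    ∃ S : Finset (ι → ℤ), (fun p i => (p i : ℝ)) '' (S : Set (ι → ℤ)) = A := by
  have hinj : Function.Injective fun (p : ι → ℤ) i => (p i : ℝ) :=
    fun p q h => funext fun i => Int.cast_injective (congrFun h i)
  refine ⟨(hA.preimage hinj.injOn).toFinset, ?_⟩
  rw [Set.Finite.coe_toFinset, image_preimage_eq_of_subset hZ]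

section LatticePoints

variable {ι : Type*} [Fintype ι]

lemma intCast_mulVec (M : Matrix ι ι ℤ) (p : ι → ℤ) :
    M.map (Int.cast : ℤ → ℝ) *ᵥ (fun i => (p i : ℝ)) = fun i => ((M *ᵥ p) i : ℝ) :=
  funext fun i => ((Int.castRingHom ℝ).map_mulVec M p i).symm

lemma exists_finset_image_mulVec_convexHull_eq (M : Matrix ι ι ℤ) {A : Set (ι → ℝ)}
    (hA : A.Finite) (hZ : A ⊆ range fun (p : ι → ℤ) i => (p i : ℝ)) :
    ∃ S : Finset (ι → ℤ), (M.map (Int.cast : ℤ → ℝ) *ᵥ ·) '' convexHull ℝ A =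
      convexHull ℝ ((fun p i => (p i : ℝ)) '' (S : Set (ι → ℤ))) := by
  have hZ' : (M.map (Int.cast : ℤ → ℝ) *ᵥ ·) '' A ⊆ range fun (p : ι → ℤ) i => (p i : ℝ) := by
    rintro _ ⟨_, hx, rfl⟩
    obtain ⟨p, rfl⟩ := hZ hx
    exact ⟨M *ᵥ p, (intCast_mulVec M p).symm⟩
  obtain ⟨S, hS⟩ := exists_finset_image_intCast_eq (hA.image _) hZ'
  exact ⟨S, hS ▸ (mulVecLin (M.map (Int.cast : ℤ → ℝ))).image_convexHull A⟩

lemma mulVec_vecMul_intCast_eq_self [DecidableEq ι] {M N : Matrix ι ι ℤ} (h : Mᵀ * N = 1)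
    (x : ι → ℝ) :
    (M.map (Int.cast : ℤ → ℝ) *ᵥ x) ᵥ* N.map (Int.cast : ℤ → ℝ) = x := by
  have hR : Mᵀ.map (Int.cast : ℤ → ℝ) * N.map Int.cast = 1 := by
    simpa [h] using (Matrix.map_mul (L := Mᵀ) (M := N) (f := Int.castRingHom ℝ)).symm
  rw [← vecMul_transpose, vecMul_vecMul, ← transpose_map, hR, vecMul_one]

end LatticePoints

lemma smul_add_smul_add_smul_add_smul_mem_convexHull {E : Type*} [AddCommGroup E] [Module ℝ E]
    {s : Set E} {a b c d : E} (ha : a ∈ s) (hb : b ∈ s) (hc : c ∈ s) (hd : d ∈ s)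
    {α β γ δ : ℝ} (hα : 0 ≤ α) (hβ : 0 ≤ β) (hγ : 0 ≤ γ) (hδ : 0 ≤ δ)
    (hsum : α + β + γ + δ = 1) :
    α • a + β • b + γ • c + δ • d ∈ convexHull ℝ s := by
  have h := (convex_convexHull ℝ s).sum_mem (t := Finset.univ) (w := ![α, β, γ, δ])
    (z := ![a, b, c, d]) (by simp [Fin.forall_fin_succ, *])
    (by simpa [Fin.sum_univ_four] using hsum)
    fun i _ => subset_convexHull ℝ s (by fin_cases i <;> assumption)
  simpa [Fin.sum_univ_four] using h

namespace U10

def vertsΔ : Set (Fin 3 → ℝ) :=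
  {![-1,0,2], ![0,1,0], ![1,2,-1], ![1,1,-1], ![0,-1,0], ![0,-1,-1]}

def vertsΔ' : Set (Fin 3 → ℝ) :=
  {![1,0,-1], ![0,-1,-1], ![-1,-1,-1], ![-1,2,-1], ![1,2,-1], ![1,0,1], ![0,-1,2], ![-1,-1,2]}

def vertsPolarΔ' : Set (Fin 3 → ℝ) :=
  {![0,0,1], ![-1,0,0], ![-1,1,0], ![0,1,0], ![1,0,0], ![0,-1,-1]}

def matM : Matrix (Fin 3) (Fin 3) ℤ := !![2,2,1; -1,0,0; 1,1,1]

def matN : Matrix (Fin 3) (Fin 3) ℤ := !![0,1,-1; -1,1,0; 0,-1,2]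

lemma det_matM : matM.det = 1 := by decide

lemma det_matN : matN.det = 1 := by decide

lemma transpose_matM_mul_matN : matMᵀ * matN = 1 := by decide

lemma isUnit_map_matM : IsUnit (matM.map (Int.cast : ℤ → ℝ)) := by
  rw [isUnit_iff_isUnit_det, ← Int.cast_det, det_matM, Int.cast_one]
  exact isUnit_one

lemma image_vecMul_vertsΔ : (· ᵥ* matM.map (Int.cast : ℤ → ℝ)) '' vertsΔ = vertsPolarΔ' := by
  have hM : matM.map (Int.cast : ℤ → ℝ) = !![2,2,1; -1,0,0; 1,1,1] := by
    ext i j; fin_cases i <;> fin_cases j <;> simp [matM]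
  norm_num [hM, vertsΔ, vertsPolarΔ', image_insert_eq]

lemma vertsPolarΔ'_subset_polarDual : vertsPolarΔ' ⊆ polarDual vertsΔ' := by
  simp [vertsPolarΔ', polarDual, vertsΔ', insert_subset_iff, vec3_dotProduct]
  norm_num

-- The cuts `-3 y₀ - 2 y₁ + y₂ = 1` and `y₀ = 0` split the polytope into three simplices sharing
-- the edge from `![0,0,1]` to `![0,-1,-1]`; the coefficients are barycentric coordinates, which
-- are nonnegative by the eight facet inequalities.
lemma polarDual_vertsΔ'_subset : polarDual vertsΔ' ⊆ convexHull ℝ vertsPolarΔ' := by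
  intro y hy
  simp only [polarDual, vertsΔ', mem_insert_iff, mem_singleton_iff, forall_eq_or_imp, forall_eq,
    mem_ofPred_eq, vec3_dotProduct, cons_val] at hy
  obtain ⟨h₁, h₂, h₃, h₄, h₅, h₆, h₇, h₈⟩ := hy
  have ha : (![0,0,1] : Fin 3 → ℝ) ∈ vertsPolarΔ' := by simp [vertsPolarΔ']
  have hb : (![-1,0,0] : Fin 3 → ℝ) ∈ vertsPolarΔ' := by simp [vertsPolarΔ']
  have hc : (![-1,1,0] : Fin 3 → ℝ) ∈ vertsPolarΔ' := by simp [vertsPolarΔ']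
  have hd : (![0,1,0] : Fin 3 → ℝ) ∈ vertsPolarΔ' := by simp [vertsPolarΔ']
  have he : (![1,0,0] : Fin 3 → ℝ) ∈ vertsPolarΔ' := by simp [vertsPolarΔ']
  have hf : (![0,-1,-1] : Fin 3 → ℝ) ∈ vertsPolarΔ' := by simp [vertsPolarΔ']
  rcases le_total 1 (-3 * y 0 - 2 * y 1 + y 2) with hcut | hcut
  · have hy : y = ((y 0 + y 2 + 1) / 2) • ![0,0,1]
        + ((-3 * y 0 - 2 * y 1 + y 2 - 1) / 2) • ![-1,0,0]
        + ((y 0 + 2 * y 1 - y 2 + 1) / 2) • ![-1,1,0] + ((y 0 - y 2 + 1) / 2) • ![0,-1,-1] := by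
      ext j; fin_cases j <;> simp <;> ring
    rw [hy]
    exact smul_add_smul_add_smul_add_smul_mem_convexHull ha hb hc hf
      (by linarith) (by linarith) (by linarith) (by linarith) (by ring)
  rcases le_total (y 0) 0 with hy₀ | hy₀
  · have hy : y = ((-y 1 + 2 * y 2 + 1) / 3) • ![0,0,1] + (-y 0) • ![-1,1,0]
        + (y 0 + (2 * y 1 - y 2 + 1) / 3) • ![0,1,0] + ((-y 1 - y 2 + 1) / 3) • ![0,-1,-1] := by
      ext j; fin_cases j <;> simp <;> ring
    rw [hy]
    exact smul_add_smul_add_smul_add_smul_mem_convexHull ha hc hd hf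
      (by linarith) (by linarith) (by linarith) (by linarith) (by ring)
  · have hy : y = ((-y 0 - y 1 + 2 * y 2 + 1) / 3) • ![0,0,1]
        + ((-y 0 + 2 * y 1 - y 2 + 1) / 3) • ![0,1,0] + y 0 • ![1,0,0]
        + ((-y 0 - y 1 - y 2 + 1) / 3) • ![0,-1,-1] := by
      ext j; fin_cases j <;> simp <;> ring
    rw [hy]
    exact smul_add_smul_add_smul_add_smul_mem_convexHull ha hd he hf
      (by linarith) (by linarith) (by linarith) (by linarith) (by ring)

lemma image_vecMul_convexHull_vertsΔ :
    (· ᵥ* matM.map (Int.cast : ℤ → ℝ)) '' convexHull ℝ vertsΔ =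
      polarDual (convexHull ℝ vertsΔ') := by
  calc (· ᵥ* matM.map (Int.cast : ℤ → ℝ)) '' convexHull ℝ vertsΔ
      = convexHull ℝ vertsPolarΔ' :=
        image_vecMul_vertsΔ ▸ (vecMulLinear (matM.map (Int.cast : ℤ → ℝ))).image_convexHull vertsΔ
    _ = polarDual vertsΔ' :=
        subset_antisymm (convexHull_min vertsPolarΔ'_subset_polarDual (convex_polarDual _))
          polarDual_vertsΔ'_subset
    _ = polarDual (convexHull ℝ vertsΔ') := (polarDual_convexHull _).symm

lemma finite_vertsΔ' : vertsΔ'.Finite := by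
  simp [vertsΔ']

lemma zero_mem_convexHull_vertsΔ' : (0 : Fin 3 → ℝ) ∈ convexHull ℝ vertsΔ' := by
  have h := smul_add_smul_add_smul_add_smul_mem_convexHull (s := vertsΔ')
    (a := ![0,-1,-1]) (b := ![-1,2,-1]) (c := ![1,2,-1]) (d := ![0,-1,2])
    (α := 1/3) (β := 1/6) (γ := 1/6) (δ := 1/3)
    (by simp [vertsΔ']) (by simp [vertsΔ']) (by simp [vertsΔ']) (by simp [vertsΔ'])
    (by norm_num) (by norm_num) (by norm_num) (by norm_num) (by norm_num)
  convert h using 1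
  ext j; fin_cases j <;> norm_num

lemma vertsΔ'_subset_range_intCast : vertsΔ' ⊆ range fun (p : Fin 3 → ℤ) i => (p i : ℝ) := by
  simp only [vertsΔ', insert_subset_iff, singleton_subset_iff]
  refine ⟨⟨![1,0,-1], ?_⟩, ⟨![0,-1,-1], ?_⟩, ⟨![-1,-1,-1], ?_⟩, ⟨![-1,2,-1], ?_⟩,
    ⟨![1,2,-1], ?_⟩, ⟨![1,0,1], ?_⟩, ⟨![0,-1,2], ?_⟩, ⟨![-1,-1,2], ?_⟩⟩ <;>
    ext i <;> fin_cases i <;> simp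

end U10

open U10 in
/-- det M = 1, the map induced by M sends Δ bijectively onto (Δ')*;
consequently Δ is reflexive and Δ* is isomorphic to Δ' under a lattice
isometry of ℤ³. -/
theorem stmt_6 :
    let Δ : Set (Fin 3 → ℝ) := convexHull ℝ ({![-1,0,2], ![0,1,0], ![1,2,-1], ![1,1,-1], ![0,-1,0], ![0,-1,-1]} : Set (Fin 3 → ℝ))
    let Δ' : Set (Fin 3 → ℝ) := convexHull ℝ ({![1,0,-1], ![0,-1,-1], ![-1,-1,-1], ![-1,2,-1], ![1,2,-1], ![1,0,1], ![0,-1,2], ![-1,-1,2]} : Set (Fin 3 → ℝ))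
    let M : Matrix (Fin 3) (Fin 3) ℤ := !![2,2,1; -1,0,0; 1,1,1]
    let Mr : Matrix (Fin 3) (Fin 3) ℝ := M.map (Int.cast : ℤ → ℝ)
    let dual : Set (Fin 3 → ℝ) → Set (Fin 3 → ℝ) :=
      fun P => {y | ∀ x ∈ P, -1 ≤ ∑ i, y i * x i}
    M.det = 1 ∧
    Set.BijOn (fun v => Matrix.vecMul v Mr) Δ (dual Δ') ∧
    ((0 : Fin 3 → ℝ) ∈ interior Δ ∧
      ∃ S : Finset (Fin 3 → ℤ),
        dual Δ = convexHull ℝ ((fun p i => ((p i : ℝ))) '' (S : Set (Fin 3 → ℤ)))) ∧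
    ∃ N : Matrix (Fin 3) (Fin 3) ℤ, (N.det = 1 ∨ N.det = -1) ∧
      (fun v => Matrix.vecMul v (N.map (Int.cast : ℤ → ℝ))) '' (dual Δ) = Δ' := by
  intro Δ Δ' M Mr dual
  have himage : (· ᵥ* Mr) '' Δ = dual Δ' := image_vecMul_convexHull_vertsΔ
  have hdualΔ : dual Δ = (Mr *ᵥ ·) '' Δ' :=
    polarDual_eq_image_mulVec isUnit_map_matM (convex_convexHull ℝ _)
      (finite_vertsΔ'.isCompact_convexHull ℝ).isClosed zero_mem_convexHull_vertsΔ' himage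
  refine ⟨det_matM, ?_, ⟨?_, ?_⟩, matN, Or.inl det_matN, ?_⟩
  · exact himage ▸ (vecMul_injective_iff_isUnit.2 isUnit_map_matM).injOn.bijOn_image
  · exact zero_mem_interior_of_image_vecMul_eq_polarDual isUnit_map_matM finite_vertsΔ'
      (himage.trans (polarDual_convexHull _))
  · rw [hdualΔ]
    exact exists_finset_image_mulVec_convexHull_eq M finite_vertsΔ' vertsΔ'_subset_range_intCast
  · have hinv : ∀ x, (Mr *ᵥ x) ᵥ* matN.map Int.cast = x :=
      mulVec_vecMul_intCast_eq_self transpose_matM_mul_matN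
    rw [hdualΔ, ← image_comp]
    simp only [Function.comp_def, hinv, image_id']
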